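/- Let K be an algebraically closed field of characteristic 2. Then the surface z^4 + x_0 x_1 x_2 (x_0 + x_1 + x_2) = 0 in P^3 over K has only finitely many singular points. -/
import Mathlib


open MvPolynomial

private lemma pow4_eq {K : Type*} [Field K] [CharP K 2] {d a : K} (h : d ^ 4 = a ^ 4) :
    d = a := by
  have h2 : frobenius K 2 (frobenius K 2 d) = frobenius K 2 (frobenius K 2 a) := by
    simp only [frobenius_def, ← pow_mul]
    exact h
  exact frobenius_inj K 2 (frobenius_inj K 2 h2)

theorem stmt_10 (K : Type*) [Field K] [IsAlgClosed K] [CharP K 2] :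
    letI F : MvPolynomial (Fin 4) K :=
      X 3 ^ 4 + X 0 * X 1 * X 2 * (X 0 + X 1 + X 2)
    Set.Finite {v : Projectivization K (Fin 4 → K) |
      MvPolynomial.eval v.rep F = 0 ∧
      ∀ i : Fin 4, MvPolynomial.eval v.rep (pderiv i F) = 0} := by
  have htwo : (2 : K) = 0 := by
    have := CharP.cast_eq_zero K 2; exact_mod_cast this
  have h1110 : (![1,1,1,0] : Fin 4 → K) ≠ 0 := fun h => by simpa using congrFun h 0
  have h1111 : (![1,1,1,1] : Fin 4 → K) ≠ 0 := fun h => by simpa using congrFun h 0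
  have h1100 : (![1,1,0,0] : Fin 4 → K) ≠ 0 := fun h => by simpa using congrFun h 0
  have h1010 : (![1,0,1,0] : Fin 4 → K) ≠ 0 := fun h => by simpa using congrFun h 0
  have h0110 : (![0,1,1,0] : Fin 4 → K) ≠ 0 := fun h => by simpa using congrFun h 1
  have h1000 : (![1,0,0,0] : Fin 4 → K) ≠ 0 := fun h => by simpa using congrFun h 0
  have h0100 : (![0,1,0,0] : Fin 4 → K) ≠ 0 := fun h => by simpa using congrFun h 1
  have h0010 : (![0,0,1,0] : Fin 4 → K) ≠ 0 := fun h => by simpa using congrFun h 2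
  apply Set.Finite.subset (s :=
    ({Projectivization.mk K ![1,1,1,1] h1111,
      Projectivization.mk K ![1,1,0,0] h1100,
      Projectivization.mk K ![1,0,1,0] h1010,
      Projectivization.mk K ![0,1,1,0] h0110,
      Projectivization.mk K ![1,0,0,0] h1000,
      Projectivization.mk K ![0,1,0,0] h0100,
      Projectivization.mk K ![0,0,1,0] h0010} : Set _))
  · exact Set.toFinite _
  intro v hv
  obtain ⟨hF0, hD⟩ := hv
  set w := v.rep with hwdef
  have hF : w 3 ^ 4 + w 0 * w 1 * w 2 * (w 0 + w 1 + w 2) = 0 := by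
    have : MvPolynomial.eval w
        ((X 3 ^ 4 + X 0 * X 1 * X 2 * (X 0 + X 1 + X 2) : MvPolynomial (Fin 4) K)) = 0 := hF0
    simpa using this
  have h0 : MvPolynomial.eval w (pderiv 0
      ((X 3 ^ 4 + X 0 * X 1 * X 2 * (X 0 + X 1 + X 2) : MvPolynomial (Fin 4) K))) = 0 := hD 0
  have h1 : MvPolynomial.eval w (pderiv 1
      ((X 3 ^ 4 + X 0 * X 1 * X 2 * (X 0 + X 1 + X 2) : MvPolynomial (Fin 4) K))) = 0 := hD 1
  have h2 : MvPolynomial.eval w (pderiv 2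
      ((X 3 ^ 4 + X 0 * X 1 * X 2 * (X 0 + X 1 + X 2) : MvPolynomial (Fin 4) K))) = 0 := hD 2
  simp [pderiv_X, Pi.single_apply] at h0 h1 h2
  set a := w 0
  set b := w 1
  set c := w 2
  set d := w 3
  have e0 : b * c * (b + c) = 0 := by linear_combination h0 - a * b * c * htwo
  have e1 : a * c * (a + c) = 0 := by linear_combination h1 - a * b * c * htwo
  have e2 : a * b * (a + b) = 0 := by linear_combination h2 - a * b * c * htwo
  have hwv : v = Projectivization.mk K w v.rep_nonzero := (v.mk_rep).symm
  simp only [Set.mem_insert_iff, Set.mem_singleton_iff, hwv]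
  by_cases ha : a = 0 <;> by_cases hb : b = 0 <;> by_cases hc : c = 0
  · -- all zero: contradiction
    exfalso
    have hd : d = 0 := pow4_eq (by linear_combination hF - b * c * (a+b+c) * ha)
    apply v.rep_nonzero
    funext i
    fin_cases i <;> simp only [Pi.zero_apply] <;> assumption
  · -- a=0,b=0,c≠0 : (0,0,1,0)
    have hd : d = 0 := pow4_eq (by linear_combination hF - b * c * (a+b+c) * ha)
    right; right; right; right; right; right
    rw [Projectivization.mk_eq_mk_iff']
    exact ⟨c, by funext i; fin_cases i <;> simp <;> first | rfl | (symm; assumption)⟩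
  · -- a=0,b≠0,c=0 : (0,1,0,0)
    have hd : d = 0 := pow4_eq (by linear_combination hF - b * c * (a+b+c) * ha)
    right; right; right; right; right; left
    rw [Projectivization.mk_eq_mk_iff']
    exact ⟨b, by funext i; fin_cases i <;> simp <;> first | rfl | (symm; assumption)⟩
  · -- a=0,b≠0,c≠0 : b=c, (0,1,1,0)
    have hd : d = 0 := pow4_eq (by linear_combination hF - b * c * (a+b+c) * ha)
    have hbc : c = b := by
      rcases mul_eq_zero.mp e0 with h | h
      · rcases mul_eq_zero.mp h with h | h
        · exact absurd h hb
        · exact absurd h hc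
      · linear_combination -h + c * htwo
    right; right; right; left
    rw [Projectivization.mk_eq_mk_iff']
    exact ⟨b, by funext i; fin_cases i <;> simp <;> first | rfl | (symm; assumption)⟩
  · -- a≠0,b=0,c=0 : (1,0,0,0)
    have hd : d = 0 := pow4_eq (by linear_combination hF - a * c * (a+b+c) * hb)
    right; right; right; right; left
    rw [Projectivization.mk_eq_mk_iff']
    exact ⟨a, by funext i; fin_cases i <;> simp <;> first | rfl | (symm; assumption)⟩
  · -- a≠0,b=0,c≠0 : c=a, (1,0,1,0)
    have hd : d = 0 := pow4_eq (by linear_combination hF - a * c * (a+b+c) * hb)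
    have hac : c = a := by
      rcases mul_eq_zero.mp e1 with h | h
      · rcases mul_eq_zero.mp h with h | h
        · exact absurd h ha
        · exact absurd h hc
      · linear_combination -h + c * htwo
    right; right; left
    rw [Projectivization.mk_eq_mk_iff']
    exact ⟨a, by funext i; fin_cases i <;> simp <;> first | rfl | (symm; assumption)⟩
  · -- a≠0,b≠0,c=0 : b=a, (1,1,0,0)
    have hd : d = 0 := pow4_eq (by linear_combination hF - a * b * (a+b+c) * hc)
    have hab : b = a := by
      rcases mul_eq_zero.mp e2 with h | h
      · rcases mul_eq_zero.mp h with h | h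
        · exact absurd h ha
        · exact absurd h hb
      · linear_combination -h + b * htwo
    right; left
    rw [Projectivization.mk_eq_mk_iff']
    exact ⟨a, by funext i; fin_cases i <;> simp <;> first | rfl | (symm; assumption)⟩
  · -- all nonzero: a=b=c=d, (1,1,1,1)
    have hab : b = a := by
      rcases mul_eq_zero.mp e2 with h | h
      · rcases mul_eq_zero.mp h with h | h
        · exact absurd h ha
        · exact absurd h hb
      · linear_combination -h + b * htwo
    have hac : c = a := by
      rcases mul_eq_zero.mp e1 with h | h
      · rcases mul_eq_zero.mp h with h | h
        · exact absurd h ha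
        · exact absurd h hc
      · linear_combination -h + c * htwo
    have hd : d = a := pow4_eq (by
      rw [hab, hac] at hF
      linear_combination hF - 2 * a ^ 4 * htwo)
    left
    rw [Projectivization.mk_eq_mk_iff']
    exact ⟨a, by funext i; fin_cases i <;> simp <;> first | rfl | (symm; assumption)⟩
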